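/- arXiv:math/0001047 — 2 statements merged into one kernel-verified Lean document; each statement's English description precedes it below -/
import Mathlib

section
/- The function u(z) = ln|z - 1/2| + ln|z + 1/2| + Σ_{n=1}^∞ 2^{-n}(ln|z - n/(2n+1)| + ln|z + n/(2n+1)|) is harmonic on D \ (E₊ ∪ E₋), where D is the open unit disc, and u(z) → -∞ as z tends to any point of E₊ ∪ E₋. -/
/-!
Near a point `z` off the closure of a bounded set of poles `a i`, the function `log ‖w - a i‖` is
the real part of a branch of `log (w - a i)` whose modulus is bounded uniformly in `i`, so by the
Weierstrass M-test a summably weighted series of these branches is holomorphic near `z`, with real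
part the weighted series of logarithms. `E₊` is closed, being the range of a sequence converging to
`1/2 ∈ E₊`, and `u` is the sum of two such series with poles `E₊` and `E₋`.

Near `x ∈ E₊ ∪ E₋` every summand of `u` is bounded above on the disc by a summable bound, while
the summand containing `log ‖z - x‖` tends to `-∞`.
-/

open Filter Topology

/-- A real function on `ℂ` is harmonic on a set if near every point of the set it is
the real part of a holomorphic function. -/
def IsHarmonicOn (f : ℂ → ℝ) (s : Set ℂ) : Prop :=
  ∀ z ∈ s, ∃ r > (0 : ℝ), ∃ g : ℂ → ℂ,
    DifferentiableOn ℂ g (Metric.ball z r) ∧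
    ∀ w ∈ Metric.ball z r ∩ s, f w = (g w).re

noncomputable def Eplus : Set ℂ :=
  {(1 / 2 : ℂ)} ∪ {z : ℂ | ∃ n : ℕ, 1 ≤ n ∧ z = (n : ℂ) / (2 * n + 1)}

noncomputable def Eminus : Set ℂ := (fun z => -z) '' Eplus

/-- The function `u`, defined by the logarithmic series. -/
noncomputable def uFun (z : ℂ) : ℝ :=
  Real.log ‖z - 1 / 2‖ + Real.log ‖z + 1 / 2‖ +
    ∑' n : ℕ, (2 : ℝ) ^ (-((n : ℤ) + 1)) *
      (Real.log ‖z - ((n : ℂ) + 1) / (2 * ((n : ℂ) + 1) + 1)‖ +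
       Real.log ‖z + ((n : ℂ) + 1) / (2 * ((n : ℂ) + 1) + 1)‖)

open Metric Set

section Harmonic

variable {f g : ℂ → ℝ} {s t : Set ℂ}

theorem IsHarmonicOn.mono (hf : IsHarmonicOn f s) (hts : t ⊆ s) : IsHarmonicOn f t := by
  intro z hz
  obtain ⟨r, hr, F, hF, hfF⟩ := hf z (hts hz)
  exact ⟨r, hr, F, hF, fun w hw => hfF w ⟨hw.1, hts hw.2⟩⟩

theorem IsHarmonicOn.congr (hf : IsHarmonicOn f s) (hfg : EqOn f g s) : IsHarmonicOn g s := by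
  intro z hz
  obtain ⟨r, hr, F, hF, hfF⟩ := hf z hz
  exact ⟨r, hr, F, hF, fun w hw => (hfg hw.2).symm.trans (hfF w hw)⟩

theorem IsHarmonicOn.add (hf : IsHarmonicOn f s) (hg : IsHarmonicOn g s) :
    IsHarmonicOn (f + g) s := by
  intro z hz
  obtain ⟨r, hr, F, hF, hfF⟩ := hf z hz
  obtain ⟨r', hr', G, hG, hgG⟩ := hg z hz
  have hsub : ball z (min r r') ⊆ ball z r ∩ ball z r' :=
    subset_inter (ball_subset_ball (min_le_left r r')) (ball_subset_ball (min_le_right r r'))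
  refine ⟨min r r', lt_min hr hr', F + G,
    (hF.mono fun w hw => (hsub hw).1).add (hG.mono fun w hw => (hsub hw).2), fun w hw => ?_⟩
  rw [Pi.add_apply, Pi.add_apply, Complex.add_re, hfF w ⟨(hsub hw.1).1, hw.2⟩,
    hgG w ⟨(hsub hw.1).2, hw.2⟩]

end Harmonic

/-- Up to the real constant `log ‖z₀ - b‖`, `g` is the principal logarithm of
`(w - b) / (z₀ - b)`, which stays in the slit plane while `w` is closer to `z₀` than `b` is. -/
theorem exists_differentiableOn_re_eq_log_norm_sub (z₀ b : ℂ) :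
    ∃ g : ℂ → ℂ, DifferentiableOn ℂ g (ball z₀ ‖z₀ - b‖) ∧ ∀ w ∈ ball z₀ ‖z₀ - b‖,
      (g w).re = Real.log ‖w - b‖ ∧ ‖g w‖ ≤ |Real.log ‖w - b‖| + Real.pi := by
  have hslit : ∀ w ∈ ball z₀ ‖z₀ - b‖, (w - b) / (z₀ - b) ∈ Complex.slitPlane := by
    intro w hw
    have hb : z₀ - b ≠ 0 := norm_pos_iff.1 (pos_of_mem_ball hw)
    have hw' : ‖(w - z₀) / (z₀ - b)‖ < 1 := by
      rw [norm_div, div_lt_one (norm_pos_iff.2 hb), ← dist_eq_norm]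
      exact hw
    convert Complex.mem_slitPlane_of_norm_lt_one hw' using 1
    field_simp
    ring
  refine ⟨fun w => Complex.log ((w - b) / (z₀ - b)) + (Real.log ‖z₀ - b‖ : ℂ),
    fun w hw => ?_, fun w hw => ?_⟩
  · exact ((Complex.differentiableAt_log (hslit w hw)).comp w
      ((differentiableAt_id.sub_const b).div_const _)).add_const _ |>.differentiableWithinAt
  · have hre : (Complex.log ((w - b) / (z₀ - b)) + (Real.log ‖z₀ - b‖ : ℂ)).re =
        Real.log ‖w - b‖ := by
      have hzb : ‖z₀ - b‖ ≠ 0 := (pos_of_mem_ball hw).ne'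
      have hwb : ‖w - b‖ ≠ 0 := by
        intro h
        have := hslit w hw
        rw [norm_eq_zero.1 h, zero_div] at this
        exact Complex.slitPlane_ne_zero this rfl
      rw [Complex.add_re, Complex.log_re, Complex.ofReal_re, norm_div, Real.log_div hwb hzb,
        sub_add_cancel]
    refine ⟨hre, ?_⟩
    calc _ ≤ |(Complex.log ((w - b) / (z₀ - b)) + (Real.log ‖z₀ - b‖ : ℂ)).re|
          + |(Complex.log ((w - b) / (z₀ - b)) + (Real.log ‖z₀ - b‖ : ℂ)).im| :=
          Complex.norm_le_abs_re_add_abs_im _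
      _ ≤ _ := by
        rw [hre, Complex.add_im, Complex.log_im, Complex.ofReal_im, add_zero]
        exact (add_le_add_iff_left _).2 (Complex.abs_arg_le_pi _)

theorem Real.abs_log_le_max {a b t : ℝ} (ha : 0 < a) (hat : a ≤ t) (htb : t ≤ b) :
    |Real.log t| ≤ max (-Real.log a) (Real.log b) := by
  have hlow := Real.log_le_log ha hat
  have hupp := Real.log_le_log (ha.trans_le hat) htb
  exact abs_le.2 ⟨by linarith [le_max_left (-Real.log a) (Real.log b)],
    hupp.trans (le_max_right _ _)⟩

section LogPotential

variable {ι : Type*} {a : ι → ℂ} {z : ℂ}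

theorem exists_forall_abs_log_norm_sub_le (ha : Bornology.IsBounded (range a))
    (hz : z ∉ closure (range a)) :
    ∃ r > 0, ∃ B, ∀ i, r ≤ ‖z - a i‖ ∧ ∀ w ∈ ball z r, |Real.log ‖w - a i‖| ≤ B := by
  obtain ⟨R, hR⟩ := ha.exists_norm_le
  obtain ⟨ε, hε, hεa⟩ : ∃ ε > 0, ∀ i, ε ≤ ‖z - a i‖ := by
    simpa [Metric.mem_closure_iff, dist_eq_norm] using hz
  refine ⟨ε / 2, by positivity, max (-Real.log (ε / 2)) (Real.log (‖z‖ + ε / 2 + R)),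
    fun i => ⟨by linarith [hεa i], fun w hw => ?_⟩⟩
  have hwz : ‖w - z‖ < ε / 2 := by rwa [← dist_eq_norm]
  refine Real.abs_log_le_max (by positivity) ?_ ?_
  · linarith [hεa i, norm_sub_le_norm_sub_add_norm_sub z w (a i), norm_sub_rev z w]
  · linarith [norm_sub_le w (a i), norm_le_norm_add_norm_sub' w z, hR _ (mem_range_self i)]

variable {w : ι → ℝ}

theorem summable_mul_log_norm_sub (hw : Summable w) (ha : Bornology.IsBounded (range a))
    (hz : z ∉ closure (range a)) : Summable fun i => w i * Real.log ‖z - a i‖ := by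
  obtain ⟨r, hr, B, hB⟩ := exists_forall_abs_log_norm_sub_le ha hz
  refine hw.abs.mul_right B |>.of_norm_bounded fun i => ?_
  rw [norm_mul, Real.norm_eq_abs, Real.norm_eq_abs]
  exact mul_le_mul_of_nonneg_left ((hB i).2 z (mem_ball_self hr)) (abs_nonneg _)

theorem isHarmonicOn_tsum_mul_log_norm_sub (hw : Summable w)
    (ha : Bornology.IsBounded (range a)) :
    IsHarmonicOn (fun z => ∑' i, w i * Real.log ‖z - a i‖) (closure (range a))ᶜ := by
  intro z hz
  obtain ⟨r, hr, B, hB⟩ := exists_forall_abs_log_norm_sub_le ha hz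
  choose g hg hgw using fun i => exists_differentiableOn_re_eq_log_norm_sub z (a i)
  have hsub : ∀ i, ball z r ⊆ ball z ‖z - a i‖ := fun i => ball_subset_ball (hB i).1
  have hbound : ∀ i, ∀ v ∈ ball z r, ‖(w i : ℂ) * g i v‖ ≤ |w i| * (B + Real.pi) := by
    intro i v hv
    rw [norm_mul, Complex.norm_real, Real.norm_eq_abs]
    refine mul_le_mul_of_nonneg_left ?_ (abs_nonneg _)
    linarith [(hgw i v (hsub i hv)).2, (hB i).2 v hv]
  have hsum : Summable fun i => |w i| * (B + Real.pi) := hw.abs.mul_right _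
  refine ⟨r, hr, fun v => ∑' i, (w i : ℂ) * g i v,
    Complex.differentiableOn_tsum_of_summable_norm hsum
      (fun i => ((hg i).mono (hsub i)).const_mul _) isOpen_ball hbound, fun v hv => ?_⟩
  rw [Complex.re_tsum (hsum.of_norm_bounded fun i => hbound i v hv.1)]
  exact tsum_congr fun i => by rw [Complex.re_ofReal_mul, (hgw i v (hsub i hv.1)).1]

end LogPotential

theorem Filter.Tendsto.tsum_atBot {ι α : Type*} {f : ι → α → ℝ} {M : ι → ℝ} {l : Filter α}
    (hM : Summable M) (hf : ∀ᶠ z in l, Summable (f · z) ∧ ∀ i, f i z ≤ M i) {k : ι}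
    (hk : Tendsto (f k) l atBot) : Tendsto (fun z => ∑' i, f i z) l atBot := by
  refine tendsto_atBot_mono' l ?_ (tendsto_atBot_add_const_right l (∑' i, M i - M k) hk)
  filter_upwards [hf] with z ⟨hfz, hfM⟩
  have hgap : M k - f k z ≤ ∑' i, (M i - f i z) :=
    (hM.sub hfz).le_tsum k fun i _ => sub_nonneg.2 (hfM i)
  rw [hM.tsum_sub hfz] at hgap
  linarith

theorem tendsto_log_norm_sub_nhdsNE {E : Type*} [NormedAddCommGroup E] (x : E) :
    Tendsto (fun z => Real.log ‖z - x‖) (𝓝[≠] x) atBot :=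
  Real.tendsto_log_nhdsGT_zero.comp (tendsto_norm_sub_self_nhdsNE x)

theorem log_norm_sub_and_add_le_two {z b : ℂ} (hz : ‖z‖ < 1) (hb : ‖b‖ ≤ 1) :
    Real.log ‖z - b‖ ≤ 2 ∧ Real.log ‖z + b‖ ≤ 2 :=
  ⟨(Real.log_le_self (norm_nonneg _)).trans (by linarith [norm_sub_le z b]),
    (Real.log_le_self (norm_nonneg _)).trans (by linarith [norm_add_le z b])⟩

theorem summable_two_zpow_neg : Summable fun n : ℕ => (2 : ℝ) ^ (-(n : ℤ)) := by
  simpa [zpow_neg, ← inv_zpow] using summable_geometric_two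

/-- An enumeration of `E₊` starting at `1/2`, chosen so that `uFun z` is
`∑ 2⁻ⁿ (log ‖z - eplusSeq n‖ + log ‖z + eplusSeq n‖)` (see `uFun_eq_tsum`). -/
noncomputable def eplusSeq (n : ℕ) : ℂ := if n = 0 then 1 / 2 else n / (2 * n + 1)

theorem range_eplusSeq : range eplusSeq = Eplus := by
  ext z
  constructor
  · rintro ⟨_ | n, rfl⟩
    · exact Or.inl rfl
    · exact Or.inr ⟨n + 1, by omega, by simp [eplusSeq]⟩
  · rintro (h | ⟨n, hn, rfl⟩)
    · exact ⟨0, by simpa [eplusSeq] using h.symm⟩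
    · exact ⟨n, by simp [eplusSeq, Nat.one_le_iff_ne_zero.1 hn]⟩

theorem range_neg_eplusSeq : range (fun n => -eplusSeq n) = Eminus := by
  rw [Eminus, ← range_eplusSeq, ← range_comp]
  rfl

theorem norm_eplusSeq_le_one (n : ℕ) : ‖eplusSeq n‖ ≤ 1 := by
  rcases eq_or_ne n 0 with rfl | hn
  · norm_num [eplusSeq]
  · rw [eplusSeq, if_neg hn, norm_div,
      show (2 * n + 1 : ℂ) = ((2 * n + 1 : ℕ) : ℂ) by push_cast; ring,
      Complex.norm_natCast, Complex.norm_natCast, div_le_one (by positivity)]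
    exact_mod_cast (by omega : n ≤ 2 * n + 1)

theorem tendsto_eplusSeq : Tendsto eplusSeq atTop (𝓝 (1 / 2)) := by
  have h := (tendsto_natCast_div_add_atTop (2⁻¹ : ℂ)).const_mul 2⁻¹
  rw [mul_one, ← one_div] at h
  refine h.congr' ((eventually_ne_atTop 0).mono fun n hn => ?_)
  rw [eplusSeq, if_neg hn]
  field_simp

theorem isCompact_Eplus : IsCompact Eplus := by
  rw [← range_eplusSeq]
  convert tendsto_eplusSeq.isCompact_insert_range using 1
  exact (insert_eq_of_mem (mem_range_self 0 : eplusSeq 0 ∈ _)).symm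

theorem isCompact_Eminus : IsCompact Eminus := isCompact_Eplus.image continuous_neg

section uFun

variable {z : ℂ}

theorem summable_mul_log_norm_sub_eplusSeq (hz : z ∉ Eplus) :
    Summable fun n : ℕ => (2 : ℝ) ^ (-(n : ℤ)) * Real.log ‖z - eplusSeq n‖ := by
  rw [← isCompact_Eplus.isClosed.closure_eq, ← range_eplusSeq] at hz
  exact summable_mul_log_norm_sub summable_two_zpow_neg
    (range_eplusSeq ▸ isCompact_Eplus.isBounded) hz

theorem summable_mul_log_norm_add_eplusSeq (hz : z ∉ Eminus) :
    Summable fun n : ℕ => (2 : ℝ) ^ (-(n : ℤ)) * Real.log ‖z + eplusSeq n‖ := by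
  rw [← isCompact_Eminus.isClosed.closure_eq, ← range_neg_eplusSeq] at hz
  simpa only [sub_neg_eq_add] using summable_mul_log_norm_sub summable_two_zpow_neg
    (range_neg_eplusSeq ▸ isCompact_Eminus.isBounded) hz

theorem summable_uFun_terms (hz : z ∉ Eplus ∪ Eminus) :
    Summable fun n : ℕ => (2 : ℝ) ^ (-(n : ℤ)) *
      (Real.log ‖z - eplusSeq n‖ + Real.log ‖z + eplusSeq n‖) := by
  simpa only [mul_add] using (summable_mul_log_norm_sub_eplusSeq fun h => hz (Or.inl h)).add
    (summable_mul_log_norm_add_eplusSeq fun h => hz (Or.inr h))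

theorem uFun_eq_tsum (hz : z ∉ Eplus ∪ Eminus) :
    uFun z = ∑' n : ℕ, (2 : ℝ) ^ (-(n : ℤ)) *
      (Real.log ‖z - eplusSeq n‖ + Real.log ‖z + eplusSeq n‖) := by
  rw [(summable_uFun_terms hz).tsum_eq_zero_add]
  simp [uFun, eplusSeq]

end uFun

theorem isHarmonicOn_uFun : IsHarmonicOn uFun (Eplus ∪ Eminus)ᶜ := by
  have hplus := isHarmonicOn_tsum_mul_log_norm_sub summable_two_zpow_neg
    (range_eplusSeq ▸ isCompact_Eplus.isBounded)
  have hminus := isHarmonicOn_tsum_mul_log_norm_sub summable_two_zpow_neg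
    (range_neg_eplusSeq ▸ isCompact_Eminus.isBounded)
  rw [range_eplusSeq, isCompact_Eplus.isClosed.closure_eq] at hplus
  rw [range_neg_eplusSeq, isCompact_Eminus.isClosed.closure_eq] at hminus
  simp only [sub_neg_eq_add] at hminus
  rw [compl_union]
  refine ((hplus.mono inter_subset_left).add (hminus.mono inter_subset_right)).congr
    fun z hz => ?_
  rw [← compl_union] at hz
  rw [uFun_eq_tsum hz, Pi.add_apply, ← Summable.tsum_add]
  · simp only [mul_add]
  · exact summable_mul_log_norm_sub_eplusSeq fun h => hz (Or.inl h)
  · exact summable_mul_log_norm_add_eplusSeq fun h => hz (Or.inr h)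

theorem tendsto_log_norm_sub_add_log_norm_add_atBot {b x : ℂ} (hb : ‖b‖ ≤ 1)
    (hx : x = b ∨ x = -b) :
    Tendsto (fun z => Real.log ‖z - b‖ + Real.log ‖z + b‖) (𝓝[ball 0 1 \ {x}] x) atBot := by
  have hlog : Tendsto (fun z => Real.log ‖z - x‖) (𝓝[ball 0 1 \ {x}] x) atBot :=
    (tendsto_log_norm_sub_nhdsNE x).mono_left (nhdsWithin_mono x (sdiff_subset_compl _ _))
  have hbound : ∀ᶠ z in 𝓝[ball 0 1 \ {x}] x, Real.log ‖z - b‖ ≤ 2 ∧ Real.log ‖z + b‖ ≤ 2 :=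
    eventually_nhdsWithin_of_forall fun z hz =>
      log_norm_sub_and_add_le_two (mem_ball_zero_iff.1 hz.1) hb
  rcases hx with rfl | rfl
  · exact tendsto_atBot_add_right_of_ge' _ 2 hlog (hbound.mono fun z hz => hz.2)
  · simp only [sub_neg_eq_add] at hlog
    exact tendsto_atBot_add_left_of_ge' _ 2 (hbound.mono fun z hz => hz.1) hlog

theorem tendsto_uFun_atBot {x : ℂ} (hx : x ∈ Eplus ∪ Eminus) :
    Tendsto uFun (𝓝[ball 0 1 \ (Eplus ∪ Eminus)] x) atBot := by
  obtain ⟨k, hk⟩ : ∃ k, x = eplusSeq k ∨ x = -eplusSeq k := by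
    rw [← range_eplusSeq, ← range_neg_eplusSeq] at hx
    rcases hx with ⟨k, rfl⟩ | ⟨k, rfl⟩
    exacts [⟨k, Or.inl rfl⟩, ⟨k, Or.inr rfl⟩]
  have hsub : ball 0 1 \ (Eplus ∪ Eminus) ⊆ ball 0 1 \ {x} :=
    sdiff_subset_sdiff_right (singleton_subset_iff.2 hx)
  have hs : ∀ᶠ z in 𝓝[ball 0 1 \ (Eplus ∪ Eminus)] x, z ∈ ball 0 1 \ (Eplus ∪ Eminus) :=
    self_mem_nhdsWithin
  refine Tendsto.congr' (hs.mono fun z hz => (uFun_eq_tsum hz.2).symm) ?_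
  refine Tendsto.tsum_atBot (M := fun n : ℕ => (2 : ℝ) ^ (-(n : ℤ)) * 4) (k := k)
    (summable_two_zpow_neg.mul_right 4)
    (hs.mono fun z hz => ⟨summable_uFun_terms hz.2, fun n => ?_⟩) ?_
  · obtain ⟨h₁, h₂⟩ :=
      log_norm_sub_and_add_le_two (mem_ball_zero_iff.1 hz.1) (norm_eplusSeq_le_one n)
    exact mul_le_mul_of_nonneg_left (by linarith) (by positivity)
  · exact ((tendsto_log_norm_sub_add_log_norm_add_atBot (norm_eplusSeq_le_one k) hk).mono_left
      (nhdsWithin_mono x hsub)).const_mul_atBot (by positivity)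

/-- `u` is harmonic on `D \ (E₊ ∪ E₋)` and tends to `-∞` at every point of `E₊ ∪ E₋`. -/
theorem uFun_harmonic_and_tendsto_atBot :
    IsHarmonicOn uFun (Metric.ball (0 : ℂ) 1 \ (Eplus ∪ Eminus)) ∧
    ∀ x ∈ Eplus ∪ Eminus,
      Tendsto uFun (𝓝[Metric.ball (0 : ℂ) 1 \ (Eplus ∪ Eminus)] x) atBot :=
  ⟨isHarmonicOn_uFun.mono fun _ hz => hz.2, fun _ => tendsto_uFun_atBot⟩
end

section
/- Let F : M → ℂ be holomorphic on a connected complex manifold M, and let D ⊂ ℂ be the open unit disc with a holomorphic surjection p : M → D whose fibers are connected. Suppose F vanishes identically on the fiber p⁻¹(z) for every z in a subset E ⊂ D having an accumulation point in D, and suppose F is not identically zero on at least one fiber p⁻¹(w) for some w ∈ D. Then we reach a contradiction; i.e., if F vanishes on all fibers over E then F ≡ 0 on M. -/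
open scoped Manifold
open Metric

/-!
Work in a chart at a point `x₀` over the accumulation point `z₀`. Since `p` is a submersion, it
is not constant along some complex line through `x₀`, so on a small circle in that line `p` stays
a definite distance away from `z₀`. By continuity the same holds on the parallel circle through
every nearby point `y`, and the open mapping argument then makes each parallel line meet the fiber
over `z₀` at a point where the line is mapped onto a neighbourhood of `z₀`. Near that point the
line meets fibers over points of `E` accumulating there, so by the one-variable identity theorem
`F` vanishes on the whole line, in particular at `y`. Thus `F` vanishes near `x₀`, and the
identity theorem on the connected manifold gives `F ≡ 0`.
-/

open Set Filter Topology

theorem AnalyticOnNhd.frequently_ne_of_ne {𝕜 E F : Type*} [NontriviallyNormedField 𝕜]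
    [NormedAddCommGroup E] [NormedSpace 𝕜 E] [NormedAddCommGroup F] [NormedSpace 𝕜 F]
    {g : E → F} {U : Set E} (hg : AnalyticOnNhd 𝕜 g U) (hU : IsPreconnected U) {z w : E}
    (hz : z ∈ U) (hw : w ∈ U) (hne : g w ≠ g z) : ∃ᶠ u in 𝓝 z, g u ≠ g z :=
  not_eventually.1 fun h =>
    hne (hg.eqOn_of_preconnected_of_eventuallyEq analyticOnNhd_const hU hz h hw)

theorem AnalyticOnNhd.eqOn_zero_of_vanishing_on_preimage_of_accPt {G : Type*}
    [NormedAddCommGroup G] [NormedSpace ℂ G] {g : ℂ → ℂ} {h : ℂ → G} {S E : Set ℂ}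
    (hg : AnalyticOnNhd ℂ g S) (hh : AnalyticOnNhd ℂ h S) (hSo : IsOpen S)
    (hS : IsPreconnected S) {w₀ w₁ : ℂ} (hw₀ : w₀ ∈ S) (hw₁ : w₁ ∈ S) (hne : g w₁ ≠ g w₀)
    (hacc : AccPt (g w₀) (𝓟 E)) (hvanish : ∀ w ∈ S, g w ∈ E → h w = 0) : EqOn h 0 S := by
  have hopen : 𝓝 (g w₀) ≤ map g (𝓝 w₀) :=
    (hg w₀ hw₀).eventually_constant_or_nhds_le_map_nhds.resolve_left
      (not_eventually.2 (hg.frequently_ne_of_ne hS hw₀ hw₁ hne))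
  have hE : ∃ᶠ w in 𝓝 w₀, g w ≠ g w₀ ∧ g w ∈ E :=
    frequently_map.1 ((accPt_iff_frequently.1 hacc).filter_mono hopen)
  refine hh.eqOn_zero_of_preconnected_of_frequently_eq_zero hS hw₀ ?_
  rw [frequently_nhdsWithin_iff]
  exact (hE.and_eventually (hSo.mem_nhds hw₀)).mono fun w ⟨⟨hgw, hwE⟩, hwS⟩ =>
    ⟨hvanish w hwS hwE, fun hw => hgw (congrArg g hw)⟩

theorem AnalyticAt.eventually_exists_pos_le_norm_sub_on_sphere {g : ℂ → ℂ} {z : ℂ}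
    (hg : AnalyticAt ℂ g z) (hne : ∃ᶠ w in 𝓝 z, g w ≠ g z) :
    ∀ᶠ r in 𝓝[>] 0, ∃ δ > 0, ∀ w ∈ sphere z r, δ ≤ ‖g w - g z‖ := by
  have hiso : ∀ᶠ w in 𝓝[≠] z, g w ≠ g z :=
    (hg.eventually_eq_or_eventually_ne analyticAt_const).resolve_left (not_eventually.2 hne)
  rw [eventually_nhdsWithin_iff] at hiso
  obtain ⟨ε, hε, hball⟩ := eventually_nhds_iff_ball.1 (hiso.and hg.eventually_analyticAt)
  filter_upwards [Ioo_mem_nhdsGT hε] with r ⟨hr, hrε⟩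
  refine (isCompact_sphere z r).exists_forall_le' (fun w hw => ?_) fun w hw => ?_
  · have hgw := (hball w (sphere_subset_ball hrε hw)).2
    exact ((hgw.continuousAt.sub continuousAt_const).norm).continuousWithinAt
  · refine norm_pos_iff.2 (sub_ne_zero.2 ((hball w (sphere_subset_ball hrε hw)).1 fun hwz => ?_))
    rw [hwz, mem_sphere, dist_self] at hw
    exact hr.ne hw

/- The factor `3` leaves room for the estimate `2 * ε ≤ ‖g w - g z‖` on the circle, which makes
the ball of radius `ε` around `g z` part of the image. -/
theorem DifferentiableOn.exists_mem_closedBall_eq {g : ℂ → ℂ} {z c : ℂ} {r R ε : ℝ}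
    (hg : DifferentiableOn ℂ g (ball z R)) (hr : 0 < r) (hrR : r < R) (hc : ‖g z - c‖ < ε)
    (hsphere : ∀ w ∈ sphere z r, 3 * ε ≤ ‖g w - c‖) : ∃ w ∈ closedBall z r, g w = c := by
  have hε : 0 < ε := (norm_nonneg _).trans_lt hc
  have hdiff : ∀ w ∈ sphere z r, 2 * ε ≤ ‖g w - g z‖ := fun w hw => by
    linarith [hsphere w hw, norm_sub_le_norm_sub_add_norm_sub (g w) (g z) c]
  have hw₁ : z + r ∈ sphere z r := by simp [hr.le]
  have hfreq : ∃ᶠ w in 𝓝 z, g w ≠ g z :=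
    (hg.analyticOnNhd isOpen_ball).frequently_ne_of_ne (convex_ball z R).isPreconnected
      (mem_ball_self (hr.trans hrR)) (sphere_subset_ball hrR hw₁) fun h => by
        linarith [hdiff _ hw₁, norm_eq_zero.2 (sub_eq_zero.2 h)]
  have hcl : DiffContOnCl ℂ g (ball z r) := by
    refine (hg.mono ?_).diffContOnCl
    rw [closure_ball z hr.ne']
    exact closedBall_subset_ball hrR
  have hc' : c ∈ ball (g z) (2 * ε / 2) := by
    rw [mem_ball, dist_eq_norm, norm_sub_rev]
    linarith
  exact hcl.ball_subset_image_closedBall hr hdiff hfreq hc'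

section NormedSpace

variable {H G : Type*} [NormedAddCommGroup H] [NormedSpace ℂ H]
  [NormedAddCommGroup G] [NormedSpace ℂ G]

theorem Convex.preimage_add_smul {U : Set H} (hU : Convex ℝ U) (a v : H) :
    Convex ℝ {w : ℂ | a + w • v ∈ U} :=
  (hU.translate_preimage_right a).is_linear_preimage
    ⟨fun w w' => add_smul w w' v, fun c w => smul_assoc c w v⟩

theorem DifferentiableOn.comp_add_smul {f : H → G} {U : Set H} (hf : DifferentiableOn ℂ f U)
    {S : Set ℂ} {y v : H} (hS : ∀ w ∈ S, y + w • v ∈ U) :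
    DifferentiableOn ℂ (fun w : ℂ => f (y + w • v)) S :=
  hf.comp (by fun_prop : Differentiable ℂ fun w : ℂ => y + w • v).differentiableOn hS

theorem exists_pos_eventually_forall_ball_add_smul_mem {U : Set H} (hU : IsOpen U) {a : H}
    (ha : a ∈ U) (v : H) : ∃ R > 0, ∀ᶠ y in 𝓝 a, ∀ w ∈ ball (0 : ℂ) R, y + w • v ∈ U := by
  have h : ∀ᶠ p : H × ℂ in 𝓝 a ×ˢ 𝓝 0, p.1 + p.2 • v ∈ U := by
    rw [← nhds_prod_eq]
    exact (by fun_prop : Continuous fun p : H × ℂ => p.1 + p.2 • v).continuousAt.preimage_mem_nhds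
      (by simpa using hU.mem_nhds ha)
  obtain ⟨pa, hpa, pb, hpb, hp⟩ := eventually_prod_iff.1 h
  obtain ⟨R, hR, hRb⟩ := eventually_nhds_iff_ball.1 hpb
  exact ⟨R, hR, hpa.mono fun y hy w hw => hp hy (hRb w hw)⟩

theorem DifferentiableOn.eventually_exists_eq_along_line {q : H → ℂ} {U : Set H}
    (hq : DifferentiableOn ℂ q U) (hU : IsOpen U) {a v : H} (ha : a ∈ U)
    (hv : ∃ᶠ w in 𝓝 (0 : ℂ), q (a + w • v) ≠ q a) :
    ∃ R > 0, ∀ᶠ y in 𝓝 a, (∀ w ∈ ball (0 : ℂ) R, y + w • v ∈ U) ∧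
      ∃ w₀ ∈ ball (0 : ℂ) R, q (y + w₀ • v) = q a ∧
      ∃ w₁ ∈ ball (0 : ℂ) R, q (y + w₁ • v) ≠ q a := by
  obtain ⟨R, hR, hline⟩ := exists_pos_eventually_forall_ball_add_smul_mem hU ha v
  have hqc : ∀ x ∈ U, ContinuousAt q x := fun x hx =>
    (hq.differentiableAt (hU.mem_nhds hx)).continuousAt
  have hga : AnalyticAt ℂ (fun w : ℂ => q (a + w • v)) 0 :=
    (hq.comp_add_smul hline.self_of_nhds).analyticAt (ball_mem_nhds 0 hR)
  obtain ⟨r, ⟨δ, hδ, hsphere⟩, hr, hrR⟩ :=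
    ((hga.eventually_exists_pos_le_norm_sub_on_sphere (by simpa using hv)).and
      (Ioo_mem_nhdsGT hR)).exists
  simp only [zero_smul, add_zero] at hsphere
  have hδ4 : 0 < δ / 4 := by positivity
  have hunif : ∀ᶠ y in 𝓝 a, ∀ w ∈ sphere (0 : ℂ) r,
      ‖q (y + w • v) - q (a + w • v)‖ < δ / 4 := by
    refine (isCompact_sphere 0 r).eventually_forall_of_forall_eventually fun w hw => ?_
    have hqw := hqc _ (hline.self_of_nhds w (sphere_subset_ball hrR hw))
    have hc : ContinuousAt (fun p : H × ℂ => q (p.1 + p.2 • v) - q (a + p.2 • v)) (a, w) :=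
      (ContinuousAt.comp (f := fun p : H × ℂ => p.1 + p.2 • v) hqw (by fun_prop)).sub
        (ContinuousAt.comp (f := fun p : H × ℂ => a + p.2 • v) hqw (by fun_prop))
    exact hc.norm.eventually (gt_mem_nhds (by simpa using hδ4))
  have hcenter : ∀ᶠ y in 𝓝 a, ‖q y - q a‖ < δ / 4 :=
    ((hqc a ha).sub continuousAt_const).norm.eventually (gt_mem_nhds (by simpa using hδ4))
  refine ⟨R, hR, ?_⟩
  filter_upwards [hline, hunif, hcenter] with y hy hyunif hyc
  have hlow : ∀ w ∈ sphere (0 : ℂ) r, 3 * (δ / 4) ≤ ‖q (y + w • v) - q a‖ := fun w hw => by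
    linarith [hsphere w hw, hyunif w hw,
      norm_sub_le_norm_sub_add_norm_sub (q (a + w • v)) (q (y + w • v)) (q a),
      norm_sub_rev (q (a + w • v)) (q (y + w • v))]
  obtain ⟨w₀, hw₀, hqw₀⟩ := (hq.comp_add_smul hy).exists_mem_closedBall_eq hr hrR
    (by simpa using hyc) hlow
  have hr_mem : (r : ℂ) ∈ sphere (0 : ℂ) r := by simp [hr.le]
  refine ⟨hy, w₀, closedBall_subset_ball hrR hw₀, hqw₀, r, sphere_subset_ball hrR hr_mem,
    fun h => ?_⟩
  linarith [hlow _ hr_mem, norm_eq_zero.2 (sub_eq_zero.2 h)]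

variable [CompleteSpace G]

theorem DifferentiableOn.eqOn_const_of_convex_of_eventually_const_along_lines {f : H → G}
    {U : Set H} (hf : DifferentiableOn ℂ f U) (hUo : IsOpen U) (hUc : Convex ℝ U) {a : H}
    (ha : a ∈ U) (h : ∀ v, ∀ᶠ w in 𝓝 (0 : ℂ), f (a + w • v) = f a) :
    EqOn f (fun _ => f a) U := by
  intro u hu
  have hg : AnalyticOnNhd ℂ (fun w : ℂ => f (a + w • (u - a))) {w | a + w • (u - a) ∈ U} :=
    (hf.comp_add_smul fun _ hw => hw).analyticOnNhd (hUo.preimage (by fun_prop))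
  simpa using hg.eqOn_of_preconnected_of_eventuallyEq analyticOnNhd_const
    (hUc.preimage_add_smul a (u - a)).isPreconnected (by simpa using ha) (h (u - a))
    (show a + (1 : ℂ) • (u - a) ∈ U by simpa using hu)

theorem DifferentiableOn.exists_frequently_ne_along_line {q : H → G} {U : Set H}
    (hq : DifferentiableOn ℂ q U) (hU : IsOpen U) {a : H} (ha : a ∈ U)
    (hne : ∃ᶠ y in 𝓝 a, q y ≠ q a) : ∃ v, ∃ᶠ w in 𝓝 (0 : ℂ), q (a + w • v) ≠ q a := by
  by_contra! h
  obtain ⟨ρ, hρ, hball⟩ := Metric.isOpen_iff.1 hU a ha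
  refine not_eventually.2 hne (eventually_of_mem (ball_mem_nhds a hρ) fun y hy => ?_)
  exact (hq.mono hball).eqOn_const_of_convex_of_eventually_const_along_lines isOpen_ball
    (convex_ball a ρ) (mem_ball_self hρ) h hy

theorem DifferentiableOn.eventuallyEq_zero_of_accPt {f : H → G} {q : H → ℂ} {U : Set H}
    (hf : DifferentiableOn ℂ f U) (hq : DifferentiableOn ℂ q U) (hU : IsOpen U) {a : H}
    (ha : a ∈ U) (hne : ∃ᶠ y in 𝓝 a, q y ≠ q a) {E : Set ℂ} (hacc : AccPt (q a) (𝓟 E))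
    (hvanish : ∀ y ∈ U, q y ∈ E → f y = 0) : f =ᶠ[𝓝 a] 0 := by
  obtain ⟨v, hv⟩ := hq.exists_frequently_ne_along_line hU ha hne
  obtain ⟨R, hR, hlines⟩ := hq.eventually_exists_eq_along_line hU ha hv
  filter_upwards [hlines] with y ⟨hy, w₀, hw₀, hqw₀, w₁, hw₁, hqw₁⟩
  have hzero := AnalyticOnNhd.eqOn_zero_of_vanishing_on_preimage_of_accPt
    ((hq.comp_add_smul hy).analyticOnNhd isOpen_ball)
    ((hf.comp_add_smul hy).analyticOnNhd isOpen_ball) isOpen_ball (convex_ball 0 R).isPreconnected hw₀ hw₁ (hqw₀ ▸ hqw₁) (hqw₀ ▸ hacc)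
    (fun w hw hwE => hvanish _ (hy w hw) hwE) (mem_ball_self hR)
  simpa using hzero

end NormedSpace

theorem map_extChartAt_symm_nhds {𝕜 E M H : Type*} [NontriviallyNormedField 𝕜]
    [NormedAddCommGroup E] [NormedSpace 𝕜 E] [TopologicalSpace H] [TopologicalSpace M]
    [ChartedSpace H M] {I : ModelWithCorners 𝕜 E H} [I.Boundaryless] {x y : M}
    (hy : y ∈ (extChartAt I x).source) :
    map (extChartAt I x).symm (𝓝 (extChartAt I x y)) = 𝓝 y := by
  rw [← map_extChartAt_symm_nhdsWithin_range' hy, I.range_eq_univ, nhdsWithin_univ]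

theorem frequently_ne_of_surjective_mfderiv {𝕜 E E' M H : Type*} [NontriviallyNormedField 𝕜]
    [NormedAddCommGroup E] [NormedSpace 𝕜 E] [NormedAddCommGroup E'] [NormedSpace 𝕜 E']
    [Nontrivial E'] [TopologicalSpace H] [TopologicalSpace M] [ChartedSpace H M]
    {I : ModelWithCorners 𝕜 E H} {p : M → E'} {x : M}
    (hp : Function.Surjective (mfderiv I 𝓘(𝕜, E') p x)) : ∃ᶠ y in 𝓝 x, p y ≠ p x := by
  refine not_eventually.1 fun hconst => ?_
  obtain ⟨v, hv⟩ := exists_ne (0 : E')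
  obtain ⟨u, hu⟩ := hp v
  rw [Filter.EventuallyEq.mfderiv_eq (I := I) (I' := 𝓘(𝕜, E')) hconst, mfderiv_const,
    zero_apply] at hu
  exact hv hu.symm

section Manifold

variable {H G M : Type*} [NormedAddCommGroup H] [NormedSpace ℂ H]
  [NormedAddCommGroup G] [NormedSpace ℂ G] [TopologicalSpace M] [ChartedSpace H M]
  [IsManifold 𝓘(ℂ, H) 1 M]

theorem MDifferentiable.differentiableOn_comp_extChartAt_symm {F : M → G}
    (hF : MDifferentiable 𝓘(ℂ, H) 𝓘(ℂ, G) F) (x : M) :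
    DifferentiableOn ℂ (F ∘ (extChartAt 𝓘(ℂ, H) x).symm) (extChartAt 𝓘(ℂ, H) x).target :=
  ((hF.mdifferentiableOn (s := univ)).comp mdifferentiableOn_extChartAt_symm
    (by simp)).differentiableOn

variable [CompleteSpace G]

theorem MDifferentiable.eventuallyEq_zero_of_accPt {F : M → G} {p : M → ℂ}
    (hF : MDifferentiable 𝓘(ℂ, H) 𝓘(ℂ, G) F) (hp : MDifferentiable 𝓘(ℂ, H) 𝓘(ℂ, ℂ) p)
    {x : M} (hne : ∃ᶠ y in 𝓝 x, p y ≠ p x) {E : Set ℂ} (hacc : AccPt (p x) (𝓟 E))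
    (hvanish : ∀ y, p y ∈ E → F y = 0) : F =ᶠ[𝓝 x] 0 := by
  have hmap := map_extChartAt_symm_nhds (I := 𝓘(ℂ, H)) (mem_extChartAt_source x)
  have hx : (extChartAt 𝓘(ℂ, H) x).symm (extChartAt 𝓘(ℂ, H) x x) = x := extChartAt_to_inv x
  rw [← hmap] at hne
  rw [← hx] at hacc
  rw [EventuallyEq, ← hmap]
  exact (hF.differentiableOn_comp_extChartAt_symm x).eventuallyEq_zero_of_accPt
    (hp.differentiableOn_comp_extChartAt_symm x) (isOpen_extChartAt_target x)
    (mem_extChartAt_target x) (by simpa only [Function.comp_apply, hx] using frequently_map.1 hne)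
    hacc fun z _ hz => hvanish _ hz

theorem MDifferentiable.eq_zero_of_eventuallyEq_zero [PreconnectedSpace M] {F : M → G}
    (hF : MDifferentiable 𝓘(ℂ, H) 𝓘(ℂ, G) F) {x₀ : M} (h : F =ᶠ[𝓝 x₀] 0) : F = 0 := by
  suffices hU : IsClopen {x | F =ᶠ[𝓝 x] 0} by
    funext x
    have hx : x ∈ {x | F =ᶠ[𝓝 x] 0} := hU.eq_univ ⟨x₀, h⟩ ▸ mem_univ x
    exact hx.self_of_nhds
  refine ⟨closure_subset_iff_isClosed.1 fun x hx => ?_, isOpen_setOfPred_eventually_nhds⟩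
  set e := extChartAt 𝓘(ℂ, H) x
  obtain ⟨ρ, hρ, hball⟩ :=
    Metric.isOpen_iff.1 (isOpen_extChartAt_target x) (e x) (mem_extChartAt_target x)
  have hV : e.source ∩ e ⁻¹' ball (e x) ρ ∈ 𝓝 x := inter_mem (extChartAt_source_mem_nhds x)
    ((continuousAt_extChartAt x).preimage_mem_nhds (ball_mem_nhds _ hρ))
  obtain ⟨y, ⟨hys, hyb⟩, hy⟩ := mem_closure_iff_nhds.1 hx _ hV
  have hey : ∀ᶠ z in 𝓝 (e y), F (e.symm z) = 0 := by
    have hy' : ∀ᶠ y' in map e.symm (𝓝 (e y)), F y' = 0 := by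
      rwa [map_extChartAt_symm_nhds hys]
    exact hy'
  have hlines : ∀ v, ∀ᶠ w in 𝓝 (0 : ℂ), F (e.symm (e y + w • v)) = F (e.symm (e y)) := by
    intro v
    have hline : Tendsto (fun w : ℂ => e y + w • v) (𝓝 0) (𝓝 (e y)) := by
      simpa using (by fun_prop : Continuous fun w : ℂ => e y + w • v).tendsto 0
    exact (hline.eventually hey).mono fun w hw => hw.trans hey.self_of_nhds.symm
  have hzero := DifferentiableOn.eqOn_const_of_convex_of_eventually_const_along_lines
    ((hF.differentiableOn_comp_extChartAt_symm x).mono hball) isOpen_ball (convex_ball _ _) hyb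
    hlines
  have hex : ∀ᶠ z in 𝓝 (e x), F (e.symm z) = 0 :=
    eventually_of_mem (ball_mem_nhds _ hρ) fun z hz => (hzero hz).trans hey.self_of_nhds
  change ∀ᶠ z in 𝓝 x, F z = 0
  rwa [← map_extChartAt_symm_nhds (I := 𝓘(ℂ, H)) (mem_extChartAt_source x)]

end Manifold

theorem vanishing_on_fibers_over_accumulating_set_general
    {H : Type*} [NormedAddCommGroup H] [NormedSpace ℂ H]
    {M : Type*} [TopologicalSpace M] [ChartedSpace H M]
    [IsManifold 𝓘(ℂ, H) (⊤ : ℕ∞) M]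
    [ConnectedSpace M]
    (F : M → ℂ) (hF : MDifferentiable 𝓘(ℂ, H) 𝓘(ℂ, ℂ) F)
    (p : M → ℂ) (hp : MDifferentiable 𝓘(ℂ, H) 𝓘(ℂ, ℂ) p)
    (hrange : Set.range p = Metric.ball (0 : ℂ) 1)
    (hsubmersion : ∀ x : M, Function.Surjective (mfderiv 𝓘(ℂ, H) 𝓘(ℂ, ℂ) p x))
    (E : Set ℂ)
    (z₀ : ℂ) (hz₀ : z₀ ∈ Metric.ball (0 : ℂ) 1) (hacc : AccPt z₀ (Filter.principal E))
    (hvanish : ∀ z ∈ E, ∀ x ∈ p ⁻¹' {z}, F x = 0) :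
    ∀ x : M, F x = 0 := by
  obtain ⟨x₀, rfl⟩ : z₀ ∈ Set.range p := hrange ▸ hz₀
  have hlocal : F =ᶠ[𝓝 x₀] 0 :=
    hF.eventuallyEq_zero_of_accPt hp (frequently_ne_of_surjective_mfderiv (hsubmersion x₀)) hacc
      fun x hx => hvanish (p x) hx x rfl
  exact congrFun (hF.eq_zero_of_eventuallyEq_zero hlocal)

/-- Identity-theorem argument on fibers: a holomorphic function on a connected complex
manifold `M` with a holomorphic surjection `p` onto the unit disc with connected fibers,
vanishing on all fibers over a set `E` having an accumulation point in the disc,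
vanishes identically (so it cannot be nonzero on any fiber). -/
theorem vanishing_on_fibers_over_accumulating_set
    {H : Type*} [NormedAddCommGroup H] [NormedSpace ℂ H]
    {M : Type*} [TopologicalSpace M] [ChartedSpace H M]
    [IsManifold 𝓘(ℂ, H) (⊤ : ℕ∞) M]
    [ConnectedSpace M]
    (F : M → ℂ) (hF : MDifferentiable 𝓘(ℂ, H) 𝓘(ℂ, ℂ) F)
    (p : M → ℂ) (hp : MDifferentiable 𝓘(ℂ, H) 𝓘(ℂ, ℂ) p)
    (hrange : Set.range p = Metric.ball (0 : ℂ) 1)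
    (hsubmersion : ∀ x : M, Function.Surjective (mfderiv 𝓘(ℂ, H) 𝓘(ℂ, ℂ) p x))
    (hfibers : ∀ z ∈ Metric.ball (0 : ℂ) 1, IsConnected (p ⁻¹' {z}))
    (E : Set ℂ) (hE : E ⊆ Metric.ball (0 : ℂ) 1)
    (z₀ : ℂ) (hz₀ : z₀ ∈ Metric.ball (0 : ℂ) 1) (hacc : AccPt z₀ (Filter.principal E))
    (hvanish : ∀ z ∈ E, ∀ x ∈ p ⁻¹' {z}, F x = 0) :
    ∀ x : M, F x = 0 :=
  vanishing_on_fibers_over_accumulating_set_general F hF p hp hrange hsubmersion E z₀ hz₀ hacc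
    hvanish
end
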